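/- For all s ≥ 4, m ∈ {1,2} and j ∈ {1,2,3}, the edge-sum chromatic number of H^{-3,s}_{m,j} equals s+2, which strictly exceeds its chromatic index s+1; hence H^{-3,s}_{m,j} is a non-perfect edge-sum color graph. -/

import Mathlib

/-- The integral sum graph on vertex set `{r, ..., s} ⊆ ℤ`:
distinct `u, v` are adjacent iff `u + v` also lies in `{r, ..., s}`. -/
def intervalSumGraph (r s : ℤ) : SimpleGraph ℤ where
  Adj u v := u ≠ v ∧ u ∈ Set.Icc r s ∧ v ∈ Set.Icc r s ∧ u + v ∈ Set.Icc r s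
  symm := by
    constructor
    rintro u v ⟨h1, h2, h3, h4⟩
    exact ⟨h1.symm, h3, h2, by rwa [add_comm]⟩
  loopless := ⟨fun u h => h.1 rfl⟩

/-- The graph `H^{-i,s}_{m,j}`: obtained from the integral sum graph `G_{-i,s}`
by deleting the vertices `-m` and `j` and all edges whose endpoint labels sum
to `-m` or to `j`. -/
def HGraph (i s m j : ℤ) : SimpleGraph ℤ where
  Adj u v := u ≠ v ∧ u ∈ Set.Icc (-i) s ∧ v ∈ Set.Icc (-i) s ∧ u + v ∈ Set.Icc (-i) s ∧
    u ≠ -m ∧ v ≠ -m ∧ u ≠ j ∧ v ≠ j ∧ u + v ≠ -m ∧ u + v ≠ j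
  symm := by
    constructor
    rintro u v ⟨h1, h2, h3, h4, h5, h6, h7, h8, h9, h10⟩
    exact ⟨h1.symm, h3, h2, by rwa [add_comm], h6, h5, h8, h7,
      by rwa [add_comm], by rwa [add_comm]⟩
  loopless := ⟨fun u h => h.1 rfl⟩

/-- The chromatic index of a graph: the least `n` such that there is a proper
edge coloring with `n` colors (distinct edges sharing a vertex get distinct colors). -/
noncomputable def chromaticIndex {V : Type*} (G : SimpleGraph V) : ℕ :=
  sInf {n : ℕ | ∃ c : Sym2 V → Fin n,
    ∀ e ∈ G.edgeSet, ∀ f ∈ G.edgeSet, e ≠ f → (∃ v, v ∈ e ∧ v ∈ f) → c e ≠ c f}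

/-- The sum of the two endpoint labels of an edge. -/
def edgeSum (e : Sym2 ℤ) : ℤ := Sym2.lift ⟨fun a b => a + b, fun a b => add_comm a b⟩ e

/-- The edge-sum chromatic number: the number of nonempty edge-sum color classes. -/
noncomputable def edgeSumChromatic (G : SimpleGraph ℤ) : ℕ :=
  {k : ℤ | ∃ e ∈ G.edgeSet, edgeSum e = k}.ncard


/-!
The edges at a common vertex `u` of an integral sum graph have pairwise distinct sums `u + v`, so
colouring every edge by its sum is a proper edge colouring. For `H = H^{-3,s}_{m,j}` its colours
are all of `{-3, …, s} \ {-m, j}`, that is `s + 2` colours, which is the edge-sum chromatic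
number. Since `m ∈ {1, 2}`, the only edge of sum `-3` left is `{0, -3}`; recolouring it with `s`
and the edge `{0, s}` with `0` keeps the colouring proper when `s ≥ 4` and saves one colour. The
`s + 1` neighbours `{-3, …, s} \ {-m, j, 0}` of vertex `0` show that `s + 1` colours are needed.
-/

section EdgeColoring

variable {V α β : Type*} (G : SimpleGraph V)

def IsProperEdgeColoring (c : Sym2 V → α) : Prop :=
  ∀ e ∈ G.edgeSet, ∀ f ∈ G.edgeSet, e ≠ f → (∃ v, v ∈ e ∧ v ∈ f) → c e ≠ c f

variable {G}

theorem IsProperEdgeColoring.comp {c : Sym2 V → α} (hc : IsProperEdgeColoring G c) {S : Set α}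
    (hcS : Set.MapsTo c G.edgeSet S) {f : α → β} (hf : Set.InjOn f S) :
    IsProperEdgeColoring G (f ∘ c) :=
  fun e he e' he' hne hv hfc => hc e he e' he' hne hv (hf (hcS he) (hcS he') hfc)

theorem IsProperEdgeColoring.exists_fin {c : Sym2 V → α}
    (hc : IsProperEdgeColoring G c) {S : Finset α} (hS : S.Nonempty)
    (hcS : Set.MapsTo c G.edgeSet S) : ∃ c' : Sym2 V → Fin S.card, IsProperEdgeColoring G c' := by
  classical
  let f : α → Fin S.card := fun a => if h : a ∈ S then S.equivFin ⟨a, h⟩ else ⟨0, hS.card_pos⟩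
  refine ⟨f ∘ c, hc.comp hcS fun a ha b hb hab => ?_⟩
  simpa [f, Finset.mem_coe.mp ha, Finset.mem_coe.mp hb] using hab

theorem IsProperEdgeColoring.card_le [Fintype α] {c : Sym2 V → α}
    (hc : IsProperEdgeColoring G c) (v : V) {N : Finset V} (hN : ∀ w ∈ N, G.Adj v w) :
    N.card ≤ Fintype.card α := by
  refine Finset.card_le_card_of_injOn (fun w => c s(v, w)) (fun _ _ => by simp)
    fun w hw w' hw' hcw => ?_
  by_contra hne
  exact hc _ (hN w hw) _ (hN w' hw') (fun h => hne (Sym2.congr_right.mp h))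
    ⟨v, by simp, by simp⟩ hcw

theorem chromaticIndex_eq_card {c : Sym2 V → α} (hc : IsProperEdgeColoring G c)
    {S : Finset α} (hS : S.Nonempty) (hcS : Set.MapsTo c G.edgeSet S) (v : V) {N : Finset V}
    (hN : ∀ w ∈ N, G.Adj v w) (hSN : S.card ≤ N.card) : chromaticIndex G = S.card := by
  have hfin : S.card ∈ {n | ∃ c' : Sym2 V → Fin n, IsProperEdgeColoring G c'} :=
    hc.exists_fin hS hcS
  obtain ⟨c', hc'⟩ := Nat.sInf_mem ⟨_, hfin⟩
  exact le_antisymm (Nat.sInf_le hfin)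
    (hSN.trans ((hc'.card_le v hN).trans_eq (Fintype.card_fin _)))

end EdgeColoring

theorem edgeSum_mk (a b : ℤ) : edgeSum s(a, b) = a + b := rfl

namespace HGraph

theorem adj_iff {i s m j u v : ℤ} : (HGraph i s m j).Adj u v ↔
    u ≠ v ∧ (-i ≤ u ∧ u ≤ s) ∧ (-i ≤ v ∧ v ≤ s) ∧ (-i ≤ u + v ∧ u + v ≤ s) ∧
      u ≠ -m ∧ v ≠ -m ∧ u ≠ j ∧ v ≠ j ∧ u + v ≠ -m ∧ u + v ≠ j := by
  simp [HGraph, Set.mem_Icc]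

noncomputable def labels (i s m j : ℤ) : Finset ℤ := ((Finset.Icc (-i) s).erase (-m)).erase j

theorem mem_labels {i s m j k : ℤ} : k ∈ labels i s m j ↔ k ≠ j ∧ k ≠ -m ∧ -i ≤ k ∧ k ≤ s := by
  simp [labels]

theorem card_labels {i s m j : ℤ} (hm : 0 < m) (hmi : m ≤ i) (hj : 0 < j) (hjs : j ≤ s) :
    ((labels i s m j).card : ℤ) = i + s - 1 := by
  rw [labels, Finset.card_erase_of_mem (by simp; omega), Finset.card_erase_of_mem (by simp; omega),
    Int.card_Icc]
  omega

variable {i s m j : ℤ}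

theorem adj_zero (hi : 0 ≤ i) (hs : 0 ≤ s) (hm : 0 < m) (hj : 0 < j) :
    ∀ w ∈ (labels i s m j).erase 0, (HGraph i s m j).Adj 0 w := by
  intro w hw
  rw [Finset.mem_erase, mem_labels] at hw
  rw [adj_iff]
  omega

theorem edgeSums_eq (hi : 3 ≤ i) (hs : 3 ≤ s) (hm : 0 < m) (hj : 0 < j) :
    {k | ∃ e ∈ (HGraph i s m j).edgeSet, edgeSum e = k} = labels i s m j := by
  ext k
  simp only [Set.mem_ofPred, Finset.mem_coe]
  constructor
  · rintro ⟨e, he, rfl⟩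
    induction e using Sym2.ind with
    | _ a b =>
      rw [SimpleGraph.mem_edgeSet, adj_iff] at he
      rw [edgeSum_mk, mem_labels]
      omega
  · intro hk
    by_cases hk0 : k = 0
    · obtain ⟨a, ha⟩ : ∃ a : ℤ, 1 ≤ a ∧ a ≤ 3 ∧ a ≠ m ∧ a ≠ j := by
        by_cases h1 : m ≠ 1 ∧ j ≠ 1
        · exact ⟨1, by omega⟩
        by_cases h2 : m ≠ 2 ∧ j ≠ 2
        · exact ⟨2, by omega⟩
        exact ⟨3, by omega⟩
      exact ⟨s(-a, a), adj_iff.mpr (by omega), by rw [edgeSum_mk]; omega⟩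
    · exact ⟨s(0, k), adj_zero (by omega) (by omega) hm hj k (Finset.mem_erase.mpr ⟨hk0, hk⟩),
        by rw [edgeSum_mk]; omega⟩

def spokeColor (s w : ℤ) : ℤ := if w = -3 then s else if w = s then 0 else w

def edgeColor (s : ℤ) : Sym2 ℤ → ℤ :=
  Sym2.lift ⟨fun u v => if u = 0 then spokeColor s v else if v = 0 then spokeColor s u else u + v,
    fun u v => by by_cases hu : u = 0 <;> by_cases hv : v = 0 <;> simp [hu, hv, add_comm]⟩

theorem edgeColor_mk (u v : ℤ) : edgeColor s s(u, v) =
    if u = 0 then spokeColor s v else if v = 0 then spokeColor s u else u + v := rfl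

theorem edgeColor_ne (hs : 4 ≤ s) {u v w : ℤ} (huv : (HGraph 3 s m j).Adj u v)
    (huw : (HGraph 3 s m j).Adj u w) (hvw : v ≠ w) : edgeColor s s(u, v) ≠ edgeColor s s(u, w) := by
  rw [adj_iff] at huv huw
  rw [edgeColor_mk, edgeColor_mk]
  unfold spokeColor
  split_ifs <;> omega

theorem isProperEdgeColoring_edgeColor (hs : 4 ≤ s) :
    IsProperEdgeColoring (HGraph 3 s m j) (edgeColor s) := by
  rintro e he f hf hef ⟨u, hue, huf⟩
  obtain ⟨v, rfl⟩ := Sym2.mem_iff_exists.mp hue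
  obtain ⟨w, rfl⟩ := Sym2.mem_iff_exists.mp huf
  exact edgeColor_ne hs he hf fun hvw => hef (by rw [hvw])

theorem mapsTo_edgeColor (hm1 : 1 ≤ m) (hm2 : m ≤ 2) (hj : 0 < j) (hjs : j < s) :
    Set.MapsTo (edgeColor s) (HGraph 3 s m j).edgeSet (labels 2 s m j) := by
  intro e he
  induction e using Sym2.ind with
  | _ u v =>
    rw [SimpleGraph.mem_edgeSet, adj_iff] at he
    rw [Finset.mem_coe, mem_labels, edgeColor_mk]
    unfold spokeColor
    split_ifs <;> omega

end HGraph

theorem edgeSumChromatic_H_3_s_m_j (s : ℕ) (hs : 4 ≤ s) (m j : ℤ)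
    (hm : m ∈ ({1, 2} : Set ℤ)) (hj : j ∈ ({1, 2, 3} : Set ℤ)) :
    edgeSumChromatic (HGraph 3 (s : ℤ) m j) = s + 2 ∧
    chromaticIndex (HGraph 3 (s : ℤ) m j) = s + 1 ∧
    chromaticIndex (HGraph 3 (s : ℤ) m j) < edgeSumChromatic (HGraph 3 (s : ℤ) m j) := by
  obtain ⟨hm1, hm2⟩ : 1 ≤ m ∧ m ≤ 2 := by
    simp only [Set.mem_insert_iff, Set.mem_singleton_iff] at hm; omega
  obtain ⟨hj1, hj3⟩ : 1 ≤ j ∧ j ≤ 3 := by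
    simp only [Set.mem_insert_iff, Set.mem_singleton_iff] at hj; omega
  have hlabels : ((HGraph.labels 3 s m j).card : ℤ) = 3 + s - 1 :=
    HGraph.card_labels (by omega) (by omega) (by omega) (by omega)
  have hcolors : ((HGraph.labels 2 s m j).card : ℤ) = 2 + s - 1 :=
    HGraph.card_labels (by omega) hm2 (by omega) (by omega)
  have hsum : edgeSumChromatic (HGraph 3 s m j) = s + 2 := by
    rw [edgeSumChromatic, HGraph.edgeSums_eq (by norm_num) (by omega) (by omega) (by omega),
      Set.ncard_coe_finset]
    omega
  have hdeg : (HGraph.labels 2 s m j).card ≤ ((HGraph.labels 3 s m j).erase 0).card := by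
    rw [Finset.card_erase_of_mem (HGraph.mem_labels.mpr (by omega))]
    omega
  have hidx : chromaticIndex (HGraph 3 s m j) = s + 1 := by
    rw [chromaticIndex_eq_card (HGraph.isProperEdgeColoring_edgeColor (by omega))
      (Finset.card_pos.mp (by omega)) (HGraph.mapsTo_edgeColor hm1 hm2 (by omega) (by omega)) 0
      (HGraph.adj_zero (by norm_num) (by omega) (by omega) (by omega)) hdeg]
    omega
  exact ⟨hsum, hidx, by omega⟩
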